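/- (Triple barrier.) Let C : ℤ → U(2) satisfy the standing Assumption with C(x) = I₂ for all x ∈ ℤ∖{−1,0,1}, and let U = S∘C. Then for every λ ∈ ℂ∖{0}, there exists a nonzero outgoing map φ : ℤ → ℂ² with Uφ = λφ if and only if λ⁴ − (c₂₁(0)c₁₂(1) + c₂₁(−1)c₁₂(0))λ² − c₂₁(−1)c₁₂(1)·det C(0) = 0. -/

import Mathlib

/-
Away from the barrier the coin is the identity, so an eigenstate of `U` with eigenvalue `λ ≠ 0`
is geometric on each free half-line. Being outgoing forces the incoming amplitudes there to
vanish, after which the state is determined by the four amplitudes `φᴸ(0), φᴸ(-1), φᴿ(0), φᴿ(1)`.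
These form an eigenvector of a 4 × 4 compression of `U` whose characteristic polynomial is the
quartic of the statement; conversely every eigenvector of that matrix extends geometrically to an
outgoing eigenstate.
-/

noncomputable section

open scoped ComplexConjugate

/-- A state: a map ℤ → ℂ², components `ψ x 0` (left, ψ^L) and `ψ x 1` (right, ψ^R). -/
abbrev QWState := ℤ → Fin 2 → ℂ

/-- The quantum walk operator U = S∘C acting pointwise:
`(Uψ)(x) = ((C(x+1)ψ(x+1))₁, (C(x−1)ψ(x−1))₂)`. -/
def qwalk (C : ℤ → Matrix (Fin 2) (Fin 2) ℂ) (ψ : QWState) : QWState :=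
  fun x => ![(C (x + 1)).mulVec (ψ (x + 1)) 0, (C (x - 1)).mulVec (ψ (x - 1)) 1]

/-- The standing Assumption on the coin. -/
structure CoinAssumption (C : ℤ → Matrix (Fin 2) (Fin 2) ℂ) : Prop where
  unitary : ∀ x, C x ∈ Matrix.unitaryGroup (Fin 2) ℂ
  d11 : ∀ x, C x 0 0 ≠ 0
  d22 : ∀ x, C x 1 1 ≠ 0
  fin : Set.Finite {x : ℤ | C x ≠ 1}

/-- Outgoing: ψ^L vanishes far right, ψ^R vanishes far left. -/
def Outgoing (ψ : QWState) : Prop :=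
  ∃ r : ℤ, 0 < r ∧ ∀ x : ℤ, r < x → ψ x 0 = 0 ∧ ψ (-x) 1 = 0

open scoped Matrix

theorem eq_pow_mul_of_succ_eq_mul {M : Type*} [Monoid M] {f : ℤ → M} {a : ℤ} {c : M}
    (hstep : ∀ x, a ≤ x → f (x + 1) = c * f x) (n : ℕ) : f (a + n) = c ^ n * f a := by
  induction n with
  | zero => simp
  | succ n ih =>
    rw [Nat.cast_succ, ← add_assoc, hstep _ (by omega), ih, pow_succ', mul_assoc]

theorem eq_zero_of_succ_eq_mul_of_eventually_eq_zero {M : Type*} [MonoidWithZero M]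
    [NoZeroDivisors M] {f : ℤ → M} {a : ℤ} {c : M} (hc : c ≠ 0)
    (hstep : ∀ x, a ≤ x → f (x + 1) = c * f x) (hzero : ∀ᶠ x in Filter.atTop, f x = 0)
    (x : ℤ) (hx : a ≤ x) : f x = 0 := by
  obtain ⟨r, hr⟩ := Filter.eventually_atTop.1 hzero
  have hfar := eq_pow_mul_of_succ_eq_mul (a := x) (fun y hy => hstep y (hx.trans hy))
    (r - x).toNat
  rw [hr _ (by omega), eq_comm] at hfar
  exact (mul_eq_zero.1 hfar).resolve_left (pow_ne_zero _ hc)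

theorem exists_mulVec_eq_smul_iff {n K : Type*} [Fintype n] [DecidableEq n] [Field K]
    (M : Matrix n n K) (μ : K) :
    (∃ v ≠ 0, M *ᵥ v = μ • v) ↔ (Matrix.scalar n μ - M).det = 0 := by
  rw [← Matrix.exists_mulVec_eq_zero_iff]
  simp only [Matrix.sub_mulVec, Matrix.scalar_apply, ← Matrix.smul_one_eq_diagonal,
    Matrix.smul_mulVec, Matrix.one_mulVec, sub_eq_zero, eq_comm]

theorem qwalk_apply_zero (C : ℤ → Matrix (Fin 2) (Fin 2) ℂ) (φ : QWState) (x : ℤ) :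
    qwalk C φ x 0 = C (x + 1) 0 0 * φ (x + 1) 0 + C (x + 1) 0 1 * φ (x + 1) 1 := by
  simp [qwalk, Matrix.mulVec, dotProduct, Fin.sum_univ_two]

theorem qwalk_apply_one (C : ℤ → Matrix (Fin 2) (Fin 2) ℂ) (φ : QWState) (x : ℤ) :
    qwalk C φ x 1 = C (x - 1) 1 0 * φ (x - 1) 0 + C (x - 1) 1 1 * φ (x - 1) 1 := by
  simp [qwalk, Matrix.mulVec, dotProduct, Fin.sum_univ_two]

theorem qwalk_apply_zero_of_eq_one {C : ℤ → Matrix (Fin 2) (Fin 2) ℂ} {x : ℤ} (h : C (x + 1) = 1)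
    (φ : QWState) : qwalk C φ x 0 = φ (x + 1) 0 := by
  simp [qwalk_apply_zero, h]

theorem qwalk_apply_one_of_eq_one {C : ℤ → Matrix (Fin 2) (Fin 2) ℂ} {x : ℤ} (h : C (x - 1) = 1)
    (φ : QWState) : qwalk C φ x 1 = φ (x - 1) 1 := by
  simp [qwalk_apply_one, h]

def interiorAmplitudes (φ : QWState) : Fin 4 → ℂ := ![φ 0 0, φ (-1) 0, φ 0 1, φ 1 1]

/-- The action of `U` on `interiorAmplitudes φ` when `φᴸ(1) = φᴿ(-1) = 0`, as for outgoing
eigenstates. -/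
def interiorBlock (C : ℤ → Matrix (Fin 2) (Fin 2) ℂ) : Matrix (Fin 4) (Fin 4) ℂ :=
  !![0, 0, 0, C 1 0 1;
     C 0 0 0, 0, C 0 0 1, 0;
     0, C (-1) 1 0, 0, 0;
     C 0 1 0, 0, C 0 1 1, 0]

theorem det_scalar_sub_interiorBlock (C : ℤ → Matrix (Fin 2) (Fin 2) ℂ) (lam : ℂ) :
    (Matrix.scalar (Fin 4) lam - interiorBlock C).det = lam ^ 4
      - (C 0 1 0 * C 1 0 1 + C (-1) 1 0 * C 0 0 1) * lam ^ 2 - C (-1) 1 0 * C 1 0 1 * (C 0).det := by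
  rw [Matrix.det_fin_two (C 0)]
  simp [interiorBlock, Matrix.det_succ_row_zero, Fin.sum_univ_succ, Fin.succAbove, Fin.castSucc,
    Fin.castAdd, Fin.castLE]
  ring

theorem interiorBlock_mulVec_eq_smul_iff (C : ℤ → Matrix (Fin 2) (Fin 2) ℂ) (lam : ℂ)
    (v : Fin 4 → ℂ) :
    interiorBlock C *ᵥ v = lam • v ↔
      C 1 0 1 * v 3 = lam * v 0 ∧ C 0 0 0 * v 0 + C 0 0 1 * v 2 = lam * v 1 ∧
        C (-1) 1 0 * v 1 = lam * v 2 ∧ C 0 1 0 * v 0 + C 0 1 1 * v 2 = lam * v 3 := by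
  simp [funext_iff, Fin.forall_fin_succ, interiorBlock, dotProduct, Fin.sum_univ_four]

def outgoingExtension (C : ℤ → Matrix (Fin 2) (Fin 2) ℂ) (lam : ℂ) (v : Fin 4 → ℂ) : QWState :=
  fun x =>
  ![if x = 0 then v 0 else if x = -1 then v 1 else
      if x ≤ -2 then C (-1) 0 0 * v 1 * lam ^ (x + 1) else 0,
    if x = 0 then v 2 else if x = 1 then v 3 else
      if 2 ≤ x then C 1 1 1 * v 3 * lam ^ (1 - x) else 0]

theorem outgoingExtension_apply_zero (C : ℤ → Matrix (Fin 2) (Fin 2) ℂ) (lam : ℂ)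
    (v : Fin 4 → ℂ) (x : ℤ) :
    outgoingExtension C lam v x 0 = if x = 0 then v 0 else if x = -1 then v 1 else
      if x ≤ -2 then C (-1) 0 0 * v 1 * lam ^ (x + 1) else 0 := rfl

theorem outgoingExtension_apply_one (C : ℤ → Matrix (Fin 2) (Fin 2) ℂ) (lam : ℂ)
    (v : Fin 4 → ℂ) (x : ℤ) :
    outgoingExtension C lam v x 1 = if x = 0 then v 2 else if x = 1 then v 3 else
      if 2 ≤ x then C 1 1 1 * v 3 * lam ^ (1 - x) else 0 := rfl

theorem outgoingExtension_zero (C : ℤ → Matrix (Fin 2) (Fin 2) ℂ) (lam : ℂ) :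
    outgoingExtension C lam 0 = 0 := by
  funext x i
  fin_cases i <;> simp [outgoingExtension]

theorem interiorAmplitudes_outgoingExtension (C : ℤ → Matrix (Fin 2) (Fin 2) ℂ) (lam : ℂ)
    (v : Fin 4 → ℂ) : interiorAmplitudes (outgoingExtension C lam v) = v := by
  funext i
  fin_cases i <;> simp [interiorAmplitudes, outgoingExtension]

theorem outgoing_outgoingExtension (C : ℤ → Matrix (Fin 2) (Fin 2) ℂ) (lam : ℂ)
    (v : Fin 4 → ℂ) : Outgoing (outgoingExtension C lam v) := by
  refine ⟨1, one_pos, fun x hx => ⟨?_, ?_⟩⟩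
  · simp (disch := omega) only [outgoingExtension_apply_zero, if_neg]
  · simp (disch := omega) only [outgoingExtension_apply_one, if_neg]

section TripleBarrier

variable {C : ℤ → Matrix (Fin 2) (Fin 2) ℂ} {lam : ℂ} {φ : QWState}

theorem qwalk_outgoingExtension (hsupp : ∀ x : ℤ, x ≠ -1 → x ≠ 0 → x ≠ 1 → C x = 1)
    (hlam : lam ≠ 0) {v : Fin 4 → ℂ} (hv : interiorBlock C *ᵥ v = lam • v) (x : ℤ) (i : Fin 2) :
    qwalk C (outgoingExtension C lam v) x i = lam * outgoingExtension C lam v x i := by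
  obtain ⟨e0, e1, e2, e3⟩ := (interiorBlock_mulVec_eq_smul_iff C lam v).1 hv
  fin_cases i
  · change qwalk C _ x 0 = lam * outgoingExtension C lam v x 0
    rw [qwalk_apply_zero]
    obtain hx | rfl | rfl | rfl | hx : 1 ≤ x ∨ x = 0 ∨ x = -1 ∨ x = -2 ∨ x ≤ -3 := by omega
    all_goals simp (disch := omega) only [outgoingExtension_apply_zero,
      outgoingExtension_apply_one, if_pos, if_neg, if_true]
    · simp [hsupp (x + 1) (by omega) (by omega) (by omega)]
    · simpa using e0
    · simpa using e1
    · norm_num [mul_left_comm lam, hlam]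
    · simp [hsupp (x + 1) (by omega) (by omega) (by omega), zpow_add_one₀ hlam]
      ring
  · change qwalk C _ x 1 = lam * outgoingExtension C lam v x 1
    rw [qwalk_apply_one]
    obtain hx | rfl | rfl | rfl | hx : x ≤ -1 ∨ x = 0 ∨ x = 1 ∨ x = 2 ∨ 3 ≤ x := by omega
    all_goals simp (disch := omega) only [outgoingExtension_apply_zero,
      outgoingExtension_apply_one, if_pos, if_neg, if_true]
    · simp [hsupp (x - 1) (by omega) (by omega) (by omega)]
    · simpa using e2
    · simpa using e3
    · norm_num [mul_left_comm lam, hlam]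
    · simp [hsupp (x - 1) (by omega) (by omega) (by omega),
        show 1 - (x - 1) = 1 - x + 1 by ring, zpow_add_one₀ hlam]
      ring

namespace Outgoing

theorem left_eq_zero_of_pos (hsupp : ∀ x : ℤ, x ≠ -1 → x ≠ 0 → x ≠ 1 → C x = 1)
    (hout : Outgoing φ) (hlam : lam ≠ 0)
    (heig : ∀ x i, qwalk C φ x i = lam * φ x i) (x : ℤ) (hx : 1 ≤ x) : φ x 0 = 0 := by
  obtain ⟨r, -, hr⟩ := hout
  have hstep : ∀ y, 1 ≤ y → φ (y + 1) 0 = lam * φ y 0 := fun y hy => by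
    rw [← heig, qwalk_apply_zero_of_eq_one (hsupp _ (by omega) (by omega) (by omega))]
  exact eq_zero_of_succ_eq_mul_of_eventually_eq_zero (f := fun y => φ y 0) hlam hstep
    (Filter.eventually_atTop.2 ⟨r + 1, fun y hy => (hr y (by omega)).1⟩) x hx

theorem right_eq_zero_of_neg (hsupp : ∀ x : ℤ, x ≠ -1 → x ≠ 0 → x ≠ 1 → C x = 1)
    (hout : Outgoing φ) (hlam : lam ≠ 0)
    (heig : ∀ x i, qwalk C φ x i = lam * φ x i) (x : ℤ) (hx : x ≤ -1) : φ x 1 = 0 := by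
  obtain ⟨r, -, hr⟩ := hout
  have hstep : ∀ y, 1 ≤ y → φ (-(y + 1)) 1 = lam * φ (-y) 1 := fun y hy => by
    rw [← heig, qwalk_apply_one_of_eq_one (hsupp _ (by omega) (by omega) (by omega))]
    ring_nf
  simpa using eq_zero_of_succ_eq_mul_of_eventually_eq_zero (f := fun y => φ (-y) 1) hlam hstep
    (Filter.eventually_atTop.2 ⟨r + 1, fun y hy => (hr y (by omega)).2⟩) (-x) (by omega)

theorem left_eq_of_le_neg_two (hsupp : ∀ x : ℤ, x ≠ -1 → x ≠ 0 → x ≠ 1 → C x = 1)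
    (hout : Outgoing φ) (hlam : lam ≠ 0)
    (heig : ∀ x i, qwalk C φ x i = lam * φ x i) (x : ℤ) (hx : x ≤ -2) :
    φ x 0 = C (-1) 0 0 * φ (-1) 0 * lam ^ (x + 1) := by
  have hfirst : φ (-2) 0 = lam⁻¹ * (C (-1) 0 0 * φ (-1) 0) := by
    rw [eq_inv_mul_iff_mul_eq₀ hlam, ← heig, qwalk_apply_zero]
    norm_num [hout.right_eq_zero_of_neg hsupp hlam heig (-1) le_rfl]
  obtain ⟨n, rfl⟩ : ∃ n : ℕ, x = -(2 + n) := ⟨(-2 - x).toNat, by omega⟩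
  have hgeom : φ (-(2 + n)) 0 = lam⁻¹ ^ n * φ (-2) 0 :=
    eq_pow_mul_of_succ_eq_mul (f := fun y => φ (-y) 0) (fun y hy => by
      rw [eq_inv_mul_iff_mul_eq₀ hlam, ← heig,
        qwalk_apply_zero_of_eq_one (hsupp _ (by omega) (by omega) (by omega))]
      ring_nf) n
  rw [hgeom, hfirst, show -(2 + (n : ℤ)) + 1 = -(n + 1 : ℕ) by push_cast; ring, zpow_neg,
    zpow_natCast, pow_succ, mul_inv, inv_pow]
  ring

theorem right_eq_of_two_le (hsupp : ∀ x : ℤ, x ≠ -1 → x ≠ 0 → x ≠ 1 → C x = 1)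
    (hout : Outgoing φ) (hlam : lam ≠ 0)
    (heig : ∀ x i, qwalk C φ x i = lam * φ x i) (x : ℤ) (hx : 2 ≤ x) :
    φ x 1 = C 1 1 1 * φ 1 1 * lam ^ (1 - x) := by
  have hfirst : φ 2 1 = lam⁻¹ * (C 1 1 1 * φ 1 1) := by
    rw [eq_inv_mul_iff_mul_eq₀ hlam, ← heig, qwalk_apply_one]
    norm_num [hout.left_eq_zero_of_pos hsupp hlam heig 1 le_rfl]
  obtain ⟨n, rfl⟩ : ∃ n : ℕ, x = 2 + n := ⟨(x - 2).toNat, by omega⟩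
  have hgeom : φ (2 + n) 1 = lam⁻¹ ^ n * φ 2 1 :=
    eq_pow_mul_of_succ_eq_mul (f := fun y => φ y 1) (fun y hy => by
      rw [eq_inv_mul_iff_mul_eq₀ hlam, ← heig,
        qwalk_apply_one_of_eq_one (hsupp _ (by omega) (by omega) (by omega))]
      ring_nf) n
  rw [hgeom, hfirst, show 1 - (2 + (n : ℤ)) = -(n + 1 : ℕ) by push_cast; ring, zpow_neg,
    zpow_natCast, pow_succ, mul_inv, inv_pow]
  ring

theorem eq_outgoingExtension (hsupp : ∀ x : ℤ, x ≠ -1 → x ≠ 0 → x ≠ 1 → C x = 1)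
    (hout : Outgoing φ) (hlam : lam ≠ 0)
    (heig : ∀ x i, qwalk C φ x i = lam * φ x i) :
    φ = outgoingExtension C lam (interiorAmplitudes φ) := by
  funext x i
  fin_cases i
  · change φ x 0 = outgoingExtension C lam (interiorAmplitudes φ) x 0
    rw [outgoingExtension_apply_zero]
    split_ifs with h0 h1 h2
    · rw [h0]; rfl
    · rw [h1]; rfl
    · exact hout.left_eq_of_le_neg_two hsupp hlam heig x h2
    · exact hout.left_eq_zero_of_pos hsupp hlam heig x (by omega)
  · change φ x 1 = outgoingExtension C lam (interiorAmplitudes φ) x 1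
    rw [outgoingExtension_apply_one]
    split_ifs with h0 h1 h2
    · rw [h0]; rfl
    · rw [h1]; rfl
    · exact hout.right_eq_of_two_le hsupp hlam heig x h2
    · exact hout.right_eq_zero_of_neg hsupp hlam heig x (by omega)

theorem interiorBlock_mulVec_interiorAmplitudes
    (hsupp : ∀ x : ℤ, x ≠ -1 → x ≠ 0 → x ≠ 1 → C x = 1)
    (hout : Outgoing φ) (hlam : lam ≠ 0)
    (heig : ∀ x i, qwalk C φ x i = lam * φ x i) :
    interiorBlock C *ᵥ interiorAmplitudes φ = lam • interiorAmplitudes φ := by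
  have h10 := hout.left_eq_zero_of_pos hsupp hlam heig 1 le_rfl
  have h11 := hout.right_eq_zero_of_neg hsupp hlam heig (-1) le_rfl
  rw [interiorBlock_mulVec_eq_smul_iff]
  refine ⟨?_, ?_, ?_, ?_⟩
  · simpa [interiorAmplitudes, qwalk_apply_zero, h10] using heig 0 0
  · simpa [interiorAmplitudes, qwalk_apply_zero] using heig (-1) 0
  · simpa [interiorAmplitudes, qwalk_apply_one, h11] using heig 0 1
  · simpa [interiorAmplitudes, qwalk_apply_one] using heig 1 1

end Outgoing

end TripleBarrier

theorem triple_barrier_resonances_general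
    (C : ℤ → Matrix (Fin 2) (Fin 2) ℂ)
    (hsupp : ∀ x : ℤ, x ≠ -1 → x ≠ 0 → x ≠ 1 → C x = 1)
    (lam : ℂ) (hlam : lam ≠ 0) :
    (∃ φ : QWState, (∃ x : ℤ, ∃ i : Fin 2, φ x i ≠ 0) ∧ Outgoing φ ∧
        (∀ x : ℤ, ∀ i : Fin 2, qwalk C φ x i = lam * φ x i))
      ↔ lam ^ 4 - (C 0 1 0 * C 1 0 1 + C (-1) 1 0 * C 0 0 1) * lam ^ 2
          - C (-1) 1 0 * C 1 0 1 * (C 0).det = 0 := by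
  rw [← det_scalar_sub_interiorBlock, ← exists_mulVec_eq_smul_iff]
  constructor
  · rintro ⟨φ, ⟨x, i, hne⟩, hout, heig⟩
    refine ⟨interiorAmplitudes φ, fun h0 => hne ?_,
      hout.interiorBlock_mulVec_interiorAmplitudes hsupp hlam heig⟩
    rw [hout.eq_outgoingExtension hsupp hlam heig, h0, outgoingExtension_zero]
    rfl
  · rintro ⟨v, hv0, hv⟩
    refine ⟨outgoingExtension C lam v, ?_, outgoing_outgoingExtension C lam v,
      qwalk_outgoingExtension hsupp hlam hv⟩
    by_contra! hzero
    apply hv0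
    rw [← interiorAmplitudes_outgoingExtension C lam v, funext fun x => funext (hzero x)]
    funext i
    fin_cases i <;> rfl

/-- Triple barrier: for λ ≠ 0, λ is a resonance iff
λ⁴ − (c₂₁(0)c₁₂(1) + c₂₁(−1)c₁₂(0))λ² − c₂₁(−1)c₁₂(1)·det C(0) = 0. -/
theorem triple_barrier_resonances
    (C : ℤ → Matrix (Fin 2) (Fin 2) ℂ) (hC : CoinAssumption C)
    (hsupp : ∀ x : ℤ, x ≠ -1 → x ≠ 0 → x ≠ 1 → C x = 1)
    (lam : ℂ) (hlam : lam ≠ 0) :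
    (∃ φ : QWState, (∃ x : ℤ, ∃ i : Fin 2, φ x i ≠ 0) ∧ Outgoing φ ∧
        (∀ x : ℤ, ∀ i : Fin 2, qwalk C φ x i = lam * φ x i))
      ↔ lam ^ 4 - (C 0 1 0 * C 1 0 1 + C (-1) 1 0 * C 0 0 1) * lam ^ 2
          - C (-1) 1 0 * C 1 0 1 * (C 0).det = 0 :=
  triple_barrier_resonances_general C hsupp lam hlam
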